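/- For all $z > 0$ and $T > 0$, $\frac{\sqrt{z^2 + d}}{\tanh\left(\frac{\sqrt{z^2+d}}{2T}\right)} \leq \left(1 + \frac{d}{4T^2}\right)\frac{z}{\tanh\left(\frac{z}{2T}\right)}$ for any $d \geq 0$. -/

import Mathlib

/-!
Let `g x = x / tanh x`. Since `tanh' = 1 - tanh ^ 2`, one finds
`g' x = x + (tanh x - x) / tanh x ^ 2 ≤ x`, the inequality `tanh x ≤ x` coming from
`(x - tanh x)' = tanh x ^ 2 ≥ 0`. Hence `g s ≤ g a + (s ^ 2 - a ^ 2) / 2` for `0 < a ≤ s`, and as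
`g ≥ 1` this is at most `(1 + s ^ 2 - a ^ 2) * g a`. The theorem is the case
`a = z / (2T)`, `s = √(z ^ 2 + d) / (2T)`, after multiplying by `2T`.
-/

open Real Set

namespace Real

theorem hasDerivAt_tanh (x : ℝ) : HasDerivAt tanh (1 - tanh x ^ 2) x := by
  have hcosh : cosh x ≠ 0 := (cosh_pos x).ne'
  have h := (hasDerivAt_sinh x).div (hasDerivAt_cosh x) hcosh
  rw [show sinh / cosh = tanh from funext fun y => (tanh_eq_sinh_div_cosh y).symm] at h
  refine h.congr_deriv ?_
  rw [tanh_eq_sinh_div_cosh]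
  field_simp

theorem tanh_pos {x : ℝ} (hx : 0 < x) : 0 < tanh x := by
  rw [tanh_eq_sinh_div_cosh]
  exact div_pos (sinh_pos_iff.mpr hx) (cosh_pos x)

theorem tanh_le_self {x : ℝ} (hx : 0 ≤ x) : tanh x ≤ x := by
  have hmono : Monotone fun y => y - tanh y :=
    monotone_of_hasDerivAt_nonneg (f' := fun y => tanh y ^ 2)
      (fun y => ((hasDerivAt_id' y).sub (hasDerivAt_tanh y)).congr_deriv (sub_sub_cancel _ _))
      fun y => sq_nonneg (tanh y)
  simpa using hmono hx

theorem one_le_div_tanh {x : ℝ} (hx : 0 < x) : 1 ≤ x / tanh x :=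
  (one_le_div (tanh_pos hx)).mpr (tanh_le_self hx.le)

theorem antitoneOn_div_tanh_sub_sq_div_two :
    AntitoneOn (fun x => x / tanh x - x ^ 2 / 2) (Ioi 0) := by
  have hderiv : ∀ x ∈ Ioi (0 : ℝ), HasDerivAt (fun x => x / tanh x - x ^ 2 / 2)
      ((tanh x - x) / tanh x ^ 2) x := by
    intro x hx
    have ht : tanh x ≠ 0 := (tanh_pos hx).ne'
    refine (((hasDerivAt_id' x).div (hasDerivAt_tanh x) ht).sub
      ((hasDerivAt_pow 2 x).div_const 2)).congr_deriv ?_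
    field_simp
    ring
  refine antitoneOn_of_hasDerivWithinAt_nonpos (f' := fun x => (tanh x - x) / tanh x ^ 2)
    (convex_Ioi 0)
    (fun x hx => (hderiv x hx).continuousAt.continuousWithinAt) (fun x hx => ?_) (fun x hx => ?_)
  · rw [interior_Ioi] at hx ⊢
    exact (hderiv x hx).hasDerivWithinAt
  · rw [interior_Ioi] at hx
    exact div_nonpos_of_nonpos_of_nonneg (sub_nonpos.mpr (tanh_le_self hx.le))
      (sq_nonneg _)

theorem div_tanh_le_of_le {a s : ℝ} (ha : 0 < a) (has : a ≤ s) :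
    s / tanh s ≤ (1 + s ^ 2 - a ^ 2) * (a / tanh a) := by
  have hanti := antitoneOn_div_tanh_sub_sq_div_two ha (ha.trans_le has) has
  have hsq : 0 ≤ s ^ 2 - a ^ 2 := by nlinarith
  calc s / tanh s ≤ a / tanh a + (s ^ 2 - a ^ 2) / 2 := by simp only at hanti; linarith
    _ ≤ a / tanh a + (s ^ 2 - a ^ 2) * (a / tanh a) := by
        nlinarith [one_le_div_tanh ha]
    _ = (1 + s ^ 2 - a ^ 2) * (a / tanh a) := by ring

end Real

theorem stmt_18 (z T d : ℝ) (hz : 0 < z) (hT : 0 < T) (hd : 0 ≤ d) :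
    Real.sqrt (z^2 + d) / Real.tanh (Real.sqrt (z^2 + d) / (2 * T)) ≤
      (1 + d / (4 * T^2)) * (z / Real.tanh (z / (2 * T))) := by
  set a := z / (2 * T)
  set s := Real.sqrt (z^2 + d) / (2 * T)
  have h2T : 0 < 2 * T := by positivity
  have has : a ≤ s :=
    div_le_div_of_nonneg_right (Real.le_sqrt_of_sq_le (by linarith)) h2T.le
  have hsq : 1 + s ^ 2 - a ^ 2 = 1 + d / (4 * T ^ 2) := by
    simp only [s, a, div_pow, Real.sq_sqrt (by positivity : 0 ≤ z ^ 2 + d)]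
    field_simp
    ring
  have hkey := Real.div_tanh_le_of_le (div_pos hz h2T) has
  rw [hsq] at hkey
  calc Real.sqrt (z^2 + d) / Real.tanh s = 2 * T * (s / Real.tanh s) := by
        simp only [s]; field_simp
    _ ≤ 2 * T * ((1 + d / (4 * T ^ 2)) * (a / Real.tanh a)) := by gcongr
    _ = (1 + d / (4 * T^2)) * (z / Real.tanh a) := by simp only [a]; field_simp
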